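/- Under the heterogeneous elasticity model with the stated integrability, fix φ ≠ 0 and write ε₀ = E[ε], ε̃ = ε − ε₀. Then for every x > 0 the wedge between the power-mean elasticity and the geometric-mean elasticity is the tilted mean of ε̃: ε_φ(x) − ε₀ = E[ exp(φ·a) · x^{φ·ε̃} · ε̃ ] / E[ exp(φ·a) · x^{φ·ε̃} ]. In particular for φ = 1, ε_1(x) − ε₀ = E[ exp(a) · x^{ε̃} · ε̃ ] / E[ exp(a) · x^{ε̃} ]. -/

import Mathlib

open MeasureTheory Real

/-- Potential outcome `Y(x)(ω) = exp (a ω + ε ω · log x)`. -/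
noncomputable def Ypot {Ω : Type*} (a e : Ω → ℝ) (x : ℝ) (ω : Ω) : ℝ :=
  Real.exp (a ω + e ω * Real.log x)

/-- The power mean `M_φ(x) = (E[Y(x)^φ])^{1/φ}` (for `φ ≠ 0`). -/
noncomputable def Mpow {Ω : Type*} [MeasurableSpace Ω] (μ : Measure Ω)
    (a e : Ω → ℝ) (φ x : ℝ) : ℝ :=
  (∫ ω, Ypot a e x ω ^ φ ∂μ) ^ (1 / φ)

/-- The power-mean elasticity `ε_φ(x) = d (log M_φ(x)) / d (log x)`. -/
noncomputable def elasPow {Ω : Type*} [MeasurableSpace Ω] (μ : Measure Ω)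
    (a e : Ω → ℝ) (φ x : ℝ) : ℝ :=
  deriv (fun t : ℝ => Real.log (Mpow μ a e φ (Real.exp t))) (Real.log x)

/-!
For fixed `φ`, `log M_φ(eᵗ) = φ⁻¹ · log ∫ exp (φ a + t φ ε) dμ`. Up to the factor `φ⁻¹`, this is the
log-partition function of the exponential family obtained by tilting `μ` by `exp (φ a)` in the
direction `φ ε`. Its derivative is therefore the mean of `ε` under `μ` tilted by
`Y(x)^φ = exp (φ a + log x · φ ε)`. The weight `exp (φ a) · x^{φ ε̃}` in the statement is `Y(x)^φ`
times the constant `x^{-φ ε₀}`, which does not change the tilted measure. So the ratio is the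
tilted mean of `ε̃ = ε - ε₀`.
-/

open ProbabilityTheory

section Tilted

variable {Ω : Type*} [MeasurableSpace Ω] {μ : Measure Ω}

lemma tilted_add_const [NeZero μ] {f : Ω → ℝ} (hf : Integrable (fun ω => exp (f ω)) μ) (c : ℝ) :
    μ.tilted (fun ω => f ω + c) = μ.tilted f := by
  have := isProbabilityMeasure_tilted hf
  rw [← tilted_const (μ.tilted f) c, tilted_tilted hf]
  rfl

lemma integrable_and_integrable_mul_of_integrable_one_add_sq_mul {g k : Ω → ℝ}
    (hg : AEStronglyMeasurable g μ) (h : Integrable (fun ω => (1 + g ω ^ 2) * k ω) μ) :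
    Integrable k μ ∧ Integrable (fun ω => g ω * k ω) μ := by
  have hpos : ∀ ω, 0 < 1 + g ω ^ 2 := fun ω => by positivity
  have hk : ∀ ω, k ω = (1 + g ω ^ 2)⁻¹ * ((1 + g ω ^ 2) * k ω) := fun ω => by
    rw [inv_mul_cancel_left₀ (hpos ω).ne']
  have hmeas : AEStronglyMeasurable (fun ω => (1 + g ω ^ 2)⁻¹) μ :=
    ((hg.aemeasurable.pow_const 2).const_add 1).inv.aestronglyMeasurable
  constructor
  · refine (h.bdd_mul hmeas (c := 1) (ae_of_all _ fun ω => ?_)).congr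
      (ae_of_all _ fun ω => (hk ω).symm)
    rw [norm_inv, Real.norm_of_nonneg (hpos ω).le]
    exact inv_le_one_of_one_le₀ (by nlinarith [sq_nonneg (g ω)])
  · have hmeas' : AEStronglyMeasurable (fun ω => g ω * (1 + g ω ^ 2)⁻¹) μ := hg.mul hmeas
    refine (h.bdd_mul hmeas' (c := 1) (ae_of_all _ fun ω => ?_)).congr
      (ae_of_all _ fun ω => ?_)
    · rw [norm_mul, norm_inv, Real.norm_of_nonneg (hpos ω).le, ← div_eq_mul_inv,
        div_le_one (hpos ω), Real.norm_eq_abs]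
      nlinarith [sq_abs (g ω), sq_nonneg (|g ω| - 1)]
    · dsimp only
      rw [mul_assoc, ← hk]

lemma integral_tilted_eq_div (f g : Ω → ℝ) :
    ∫ ω, g ω ∂μ.tilted f = (∫ ω, exp (f ω) * g ω ∂μ) / ∫ ω, exp (f ω) ∂μ := by
  simp_rw [integral_tilted, smul_eq_mul, div_mul_eq_mul_div, integral_div]

lemma hasDerivAt_log_integral_exp_add_mul [NeZero μ] {f g : Ω → ℝ}
    (h : ∀ t, Integrable (fun ω => exp (f ω + t * g ω)) μ) (t : ℝ) :
    HasDerivAt (fun s => log (∫ ω, exp (f ω + s * g ω) ∂μ))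
      (∫ ω, g ω ∂μ.tilted fun ω => f ω + t * g ω) t := by
  have hf : Integrable (fun ω => exp (f ω)) μ := by simpa using h 0
  set ν := μ.tilted f
  have : IsProbabilityMeasure ν := isProbabilityMeasure_tilted hf
  have hν : ∀ s, s ∈ integrableExpSet g ν := fun s => by
    rw [integrableExpSet, Set.mem_ofPred_eq, integrable_tilted_iff hf]
    simpa only [smul_eq_mul, ← exp_add] using h s
  have ht : t ∈ interior (integrableExpSet g ν) := by
    rw [Set.eq_univ_of_forall hν, interior_univ]
    exact Set.mem_univ t
  have hlog : (fun s => log (∫ ω, exp (f ω + s * g ω) ∂μ))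
      = fun s => log (∫ ω, exp (f ω) ∂μ) + cgf g ν s := by
    funext s
    rw [cgf, mgf, integral_exp_tilted]
    simp only [Pi.add_apply]
    rw [log_div (integral_exp_pos (h s)).ne' (integral_exp_pos hf).ne', add_sub_cancel]
  have hderiv := ((analyticAt_cgf ht).differentiableAt.hasDerivAt).const_add
    (log (∫ ω, exp (f ω) ∂μ))
  rw [hlog]
  refine hderiv.congr_deriv ?_
  rw [← integral_tilted_mul_self ht, tilted_tilted hf]
  rfl

end Tilted

lemma Ypot_exp_rpow {Ω : Type*} (a e : Ω → ℝ) (φ t : ℝ) (ω : Ω) :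
    Ypot a e (exp t) ω ^ φ = exp (φ * a ω + t * (φ * e ω)) := by
  rw [Ypot, log_exp, ← exp_mul]
  ring_nf

section Elasticity

variable {Ω : Type*} [MeasurableSpace Ω] {μ : Measure Ω} {a e : Ω → ℝ} {φ : ℝ}

lemma log_Mpow_exp [NeZero μ] {t : ℝ}
    (hint : Integrable (fun ω => exp (φ * a ω + t * (φ * e ω))) μ) :
    log (Mpow μ a e φ (exp t)) = φ⁻¹ * log (∫ ω, exp (φ * a ω + t * (φ * e ω)) ∂μ) := by
  simp_rw [Mpow, Ypot_exp_rpow]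
  rw [log_rpow (integral_exp_pos hint), one_div]

lemma elasPow_eq_integral_tilted [NeZero μ] (hφ : φ ≠ 0)
    (hint : ∀ t, Integrable (fun ω => exp (φ * a ω + t * (φ * e ω))) μ) (x : ℝ) :
    elasPow μ a e φ x = ∫ ω, e ω ∂μ.tilted fun ω => φ * a ω + log x * (φ * e ω) := by
  have hlog : (fun t => log (Mpow μ a e φ (exp t)))
      = fun t => φ⁻¹ * log (∫ ω, exp (φ * a ω + t * (φ * e ω)) ∂μ) :=
    funext fun t => log_Mpow_exp (hint t)
  rw [elasPow, hlog, ((hasDerivAt_log_integral_exp_add_mul hint (log x)).const_mul φ⁻¹).deriv,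
    integral_const_mul, inv_mul_cancel_left₀ hφ]

lemma elasPow_sub_integral_eq [IsProbabilityMeasure μ] (he : Measurable e) (hφ : φ ≠ 0)
    (hM : ∀ t : ℝ, Integrable (fun ω => (1 + e ω ^ 2) * exp (φ * a ω + t * φ * e ω)) μ)
    {x : ℝ} (hx : 0 < x) :
    elasPow μ a e φ x - (∫ ω, e ω ∂μ)
      = (∫ ω, exp (φ * a ω) * x ^ (φ * (e ω - ∫ ω', e ω' ∂μ))
            * (e ω - ∫ ω', e ω' ∂μ) ∂μ)
        / (∫ ω, exp (φ * a ω) * x ^ (φ * (e ω - ∫ ω', e ω' ∂μ)) ∂μ) := by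
  set ε₀ := ∫ ω, e ω ∂μ
  have hint : ∀ t : ℝ, Integrable (fun ω => exp (φ * a ω + t * (φ * e ω))) μ ∧
      Integrable (fun ω => e ω * exp (φ * a ω + t * (φ * e ω))) μ := fun t => by
    simpa only [mul_assoc] using
      integrable_and_integrable_mul_of_integrable_one_add_sq_mul he.aestronglyMeasurable (hM t)
  set F := fun ω => φ * a ω + log x * (φ * e ω)
  have hweight : ∀ ω, exp (φ * a ω) * x ^ (φ * (e ω - ε₀)) = exp (F ω + -(φ * ε₀ * log x)) :=
    fun ω => by
      rw [rpow_def_of_pos hx, ← exp_add]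
      congr 1
      simp only [F]
      ring
  have : IsProbabilityMeasure (μ.tilted F) := isProbabilityMeasure_tilted (hint _).1
  have he_int : Integrable e (μ.tilted F) :=
    (integrable_tilted_iff (hint _).1 e).2 <| by
      simpa only [smul_eq_mul, mul_comm (exp _)] using (hint (log x)).2
  calc elasPow μ a e φ x - ε₀ = (∫ ω, e ω ∂μ.tilted F) - ε₀ := by
        rw [elasPow_eq_integral_tilted hφ (fun t => (hint t).1)]
    _ = ∫ ω, (e ω - ε₀) ∂μ.tilted F := by
        rw [integral_sub he_int (integrable_const ε₀), integral_const, probReal_univ, one_smul]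
    _ = ∫ ω, (e ω - ε₀) ∂μ.tilted fun ω => F ω + -(φ * ε₀ * log x) := by
        rw [tilted_add_const (hint _).1]
    _ = _ := by simp_rw [integral_tilted_eq_div, hweight]

end Elasticity

theorem stmt3_general
    {Ω : Type*} [MeasurableSpace Ω] (μ : Measure Ω) [IsProbabilityMeasure μ]
    (a e : Ω → ℝ) (he : Measurable e)
    (φ : ℝ) (hφ : φ ≠ 0)
    (hMom : ∀ t : ℝ, Integrable (fun ω => (1 + e ω ^ 2) * Real.exp (φ * a ω + t * φ * e ω)) μ)
    (hMom1 : ∀ t : ℝ, Integrable (fun ω => (1 + e ω ^ 2) * Real.exp (1 * a ω + t * 1 * e ω)) μ)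
    (x : ℝ) (hx : 0 < x) :
    elasPow μ a e φ x - (∫ ω, e ω ∂μ)
      = (∫ ω, Real.exp (φ * a ω) * x ^ (φ * (e ω - ∫ ω', e ω' ∂μ))
            * (e ω - ∫ ω', e ω' ∂μ) ∂μ)
        / (∫ ω, Real.exp (φ * a ω) * x ^ (φ * (e ω - ∫ ω', e ω' ∂μ)) ∂μ)
    ∧ elasPow μ a e 1 x - (∫ ω, e ω ∂μ)
      = (∫ ω, Real.exp (a ω) * x ^ (e ω - ∫ ω', e ω' ∂μ)
            * (e ω - ∫ ω', e ω' ∂μ) ∂μ)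
        / (∫ ω, Real.exp (a ω) * x ^ (e ω - ∫ ω', e ω' ∂μ) ∂μ) := by
  refine ⟨elasPow_sub_integral_eq he hφ hMom hx, ?_⟩
  simpa using elasPow_sub_integral_eq he one_ne_zero hMom1 hx

/-- tilted-mean wedge. For `φ ≠ 0`, writing `ε₀ = E[ε]` and `ε̃ = ε − ε₀`,
for every `x > 0`:
`ε_φ(x) − ε₀ = E[exp(φ a) · x^{φ ε̃} · ε̃] / E[exp(φ a) · x^{φ ε̃}]`,
and in particular for `φ = 1`,
`ε_1(x) − ε₀ = E[exp(a) · x^{ε̃} · ε̃] / E[exp(a) · x^{ε̃}]`. -/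
theorem stmt3
    {Ω : Type*} [MeasurableSpace Ω] (μ : Measure Ω) [IsProbabilityMeasure μ]
    (a e : Ω → ℝ) (ha : Measurable a) (he : Measurable e)
    (hInta : Integrable a μ) (hInte : Integrable e μ)
    (φ : ℝ) (hφ : φ ≠ 0)
    (hMom : ∀ t : ℝ, Integrable (fun ω => (1 + e ω ^ 2) * Real.exp (φ * a ω + t * φ * e ω)) μ)
    (hMom1 : ∀ t : ℝ, Integrable (fun ω => (1 + e ω ^ 2) * Real.exp (1 * a ω + t * 1 * e ω)) μ)
    (x : ℝ) (hx : 0 < x) :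
    elasPow μ a e φ x - (∫ ω, e ω ∂μ)
      = (∫ ω, Real.exp (φ * a ω) * x ^ (φ * (e ω - ∫ ω', e ω' ∂μ))
            * (e ω - ∫ ω', e ω' ∂μ) ∂μ)
        / (∫ ω, Real.exp (φ * a ω) * x ^ (φ * (e ω - ∫ ω', e ω' ∂μ)) ∂μ)
    ∧ elasPow μ a e 1 x - (∫ ω, e ω ∂μ)
      = (∫ ω, Real.exp (a ω) * x ^ (e ω - ∫ ω', e ω' ∂μ)
            * (e ω - ∫ ω', e ω' ∂μ) ∂μ)
        / (∫ ω, Real.exp (a ω) * x ^ (e ω - ∫ ω', e ω' ∂μ) ∂μ) :=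
  stmt3_general μ a e he φ hφ hMom hMom1 x hx
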